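/- Let m, d ≥ 1, let W, W₀ : Fin m → ℝ^d, let x ∈ ℝ^d with ‖x‖ ≤ 1, and let R > 0. Then (S_{W,W₀}(x) : ℝ) ≤ #{ i : |⟨W₀_i, x⟩| ≤ R } + (Σ_{i} ‖W_i − W₀_i‖²) / R². -/
import Mathlib


open RealInnerProductSpace

open Classical in
/-- The number of neurons whose activation sign at `x` differs between the
weights `W` and the weights `W₀`. -/
noncomputable def signFlips (m d : ℕ) (W W₀ : Fin m → EuclideanSpace ℝ (Fin d))
    (x : EuclideanSpace ℝ (Fin d)) : ℕ :=
  (Finset.univ.filter fun i : Fin m => ¬((0 ≤ ⟪W i, x⟫) ↔ (0 ≤ ⟪W₀ i, x⟫))).card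

open Classical in
/-- The number of sign flips is bounded by the number of neurons initialized
within the band `|⟪W₀ i, x⟫| ≤ R` plus the squared Frobenius movement over `R²`. -/
theorem signFlips_le_band_add_movement (m d : ℕ) (hm : 1 ≤ m) (hd : 1 ≤ d)
    (W W₀ : Fin m → EuclideanSpace ℝ (Fin d))
    (x : EuclideanSpace ℝ (Fin d)) (hx : ‖x‖ ≤ 1) (R : ℝ) (hR : 0 < R) :
    (signFlips m d W W₀ x : ℝ) ≤
      ((Finset.univ.filter fun i : Fin m => |⟪W₀ i, x⟫| ≤ R).card : ℝ) +
        (∑ i, ‖W i - W₀ i‖ ^ 2) / R ^ 2 := by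
  classical
  set A := Finset.univ.filter (fun i : Fin m => ¬((0 ≤ ⟪W i, x⟫) ↔ (0 ≤ ⟪W₀ i, x⟫))) with hA
  set B := Finset.univ.filter (fun i : Fin m => |⟪W₀ i, x⟫| ≤ R) with hB
  have key : ∀ i ∈ A \ B, R ^ 2 ≤ ‖W i - W₀ i‖ ^ 2 := by
    intro i hi
    simp only [hA, hB, Finset.mem_sdiff, Finset.mem_filter, Finset.mem_univ, true_and] at hi
    obtain ⟨hflip, hband⟩ := hi
    push_neg at hband
    have h1 : |⟪W₀ i, x⟫| ≤ |⟪W i, x⟫ - ⟪W₀ i, x⟫| := by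
      rcases le_or_gt 0 ⟪W i, x⟫ with h | h <;> rcases le_or_gt 0 ⟪W₀ i, x⟫ with h0 | h0
      · exact absurd (iff_of_true h h0) hflip
      · rw [abs_of_neg h0, abs_of_nonneg (by linarith)]; linarith
      · rw [abs_of_nonneg h0, abs_of_nonpos (by linarith)]; linarith
      · exact absurd (iff_of_false (not_le.mpr h) (not_le.mpr h0)) hflip
    have h2 : |⟪W i, x⟫ - ⟪W₀ i, x⟫| ≤ ‖W i - W₀ i‖ := by
      have h3 := abs_real_inner_le_norm (W i - W₀ i) x
      rw [inner_sub_left] at h3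
      calc |⟪W i, x⟫ - ⟪W₀ i, x⟫| ≤ ‖W i - W₀ i‖ * ‖x‖ := h3
        _ ≤ ‖W i - W₀ i‖ * 1 := mul_le_mul_of_nonneg_left hx (norm_nonneg _)
        _ = _ := mul_one _
    have hR' : R ≤ ‖W i - W₀ i‖ := le_trans hband.le (h1.trans h2)
    exact pow_le_pow_left₀ hR.le hR' 2
  have hcard : ((A \ B).card : ℝ) * R ^ 2 ≤ ∑ i, ‖W i - W₀ i‖ ^ 2 := by
    calc ((A \ B).card : ℝ) * R ^ 2 = ∑ _i ∈ A \ B, R ^ 2 := by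
          rw [Finset.sum_const, nsmul_eq_mul]
      _ ≤ ∑ i ∈ A \ B, ‖W i - W₀ i‖ ^ 2 := Finset.sum_le_sum key
      _ ≤ ∑ i, ‖W i - W₀ i‖ ^ 2 :=
          Finset.sum_le_sum_of_subset_of_nonneg (Finset.subset_univ _)
            (fun i _ _ => by positivity)
  have hdiv : ((A \ B).card : ℝ) ≤ (∑ i, ‖W i - W₀ i‖ ^ 2) / R ^ 2 :=
    (le_div_iff₀ (by positivity)).mpr hcard
  have hsplit : (A.card : ℝ) ≤ (B.card : ℝ) + ((A \ B).card : ℝ) := by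
    have h := Finset.card_le_card_sdiff_add_card (s := A) (t := B)
    push_cast
    calc (A.card : ℝ) ≤ ((A \ B).card + B.card : ℕ) := by exact_mod_cast h
      _ = (B.card : ℝ) + ((A \ B).card : ℝ) := by push_cast; ring
  have : (signFlips m d W W₀ x : ℝ) = (A.card : ℝ) := rfl
  rw [this]
  calc (A.card : ℝ) ≤ (B.card : ℝ) + ((A \ B).card : ℝ) := hsplit
    _ ≤ (B.card : ℝ) + (∑ i, ‖W i - W₀ i‖ ^ 2) / R ^ 2 := by linarith
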